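/- arXiv:2210.12082 — 5 statements merged into one kernel-verified Lean document; each statement's English description precedes it below -/
import Mathlib

section
/- Suppose f: ℝ → ℝ is nonnegative, differentiable, and H-smooth (i.e., its derivative is H-Lipschitz). Then f is √H-sqrt-Lipschitz, i.e., |f'(x)| ≤ 2√H · √(f(x)) for all x. -/
/-!
Applying the mean value theorem to `z ↦ f z - (z - x) f'(x)` gives
`0 ≤ f (x + t) ≤ f x + f'(x) t + H t²` for every `t`. A quadratic in `t` that is nonnegative
everywhere has nonpositive discriminant, so `f'(x)² ≤ 4 H f(x)`.
-/

theorem nonneg_of_norm_sub_le_mul_norm_sub {𝕜 G : Type*} [RCLike 𝕜] [NormedAddCommGroup G]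
    {g : 𝕜 → G} {H : ℝ} (hg : ∀ x y, ‖g x - g y‖ ≤ H * ‖x - y‖) : 0 ≤ H := by
  have h := hg 1 0
  rw [sub_zero, norm_one, mul_one] at h
  exact (norm_nonneg _).trans h

theorem norm_sub_sub_smul_deriv_le {𝕜 G : Type*} [RCLike 𝕜] [NormedAddCommGroup G]
    [NormedSpace 𝕜 G] {f : 𝕜 → G} {H : ℝ} (hf : Differentiable 𝕜 f)
    (hf' : ∀ x y, ‖deriv f x - deriv f y‖ ≤ H * ‖x - y‖) (x y : 𝕜) :
    ‖f y - f x - (y - x) • deriv f x‖ ≤ H * ‖y - x‖ ^ 2 := by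
  have hH : 0 ≤ H := nonneg_of_norm_sub_le_mul_norm_sub hf'
  let g : 𝕜 → G := fun z => f z - (z - x) • deriv f x
  have hg : ∀ z, HasDerivAt g (deriv f z - deriv f x) z := fun z => by
    have h := (hf z).hasDerivAt.sub (((hasDerivAt_id z).sub_const x).smul_const (deriv f x))
    rwa [one_smul] at h
  have hbound : ∀ z ∈ segment ℝ x y, ‖deriv f z - deriv f x‖ ≤ H * ‖y - x‖ := fun z hz =>
    (hf' z x).trans (mul_le_mul_of_nonneg_left (norm_sub_le_of_mem_segment hz) hH)
  calc ‖f y - f x - (y - x) • deriv f x‖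
    _ = ‖g y - g x‖ := by simp only [g, sub_self, zero_smul, sub_zero, sub_right_comm]
    _ ≤ H * ‖y - x‖ * ‖y - x‖ :=
      (convex_segment x y).norm_image_sub_le_of_norm_hasDerivWithin_le
        (fun z _ => (hg z).hasDerivWithinAt) hbound (left_mem_segment ℝ x y)
        (right_mem_segment ℝ x y)
    _ = H * ‖y - x‖ ^ 2 := by ring

theorem sq_le_four_mul_mul_of_forall_quadratic_nonneg {a b c : ℝ}
    (h : ∀ t, 0 ≤ a + b * t + c * t ^ 2) : b ^ 2 ≤ 4 * c * a := by
  have := discrim_le_zero (a := c) (b := b) (c := a) fun t => by linarith [h t, sq t]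
  rw [discrim] at this
  linarith

/-- A nonnegative, differentiable, `H`-smooth function (derivative `H`-Lipschitz)
is `√H`-sqrt-Lipschitz: `|f'(x)| ≤ 2√H·√(f(x))` for all `x`. -/
theorem smooth_nonneg_is_sqrt_lipschitz (f : ℝ → ℝ) (H : ℝ)
    (hnonneg : ∀ x, 0 ≤ f x) (hdiff : Differentiable ℝ f)
    (hsmooth : ∀ x y : ℝ, |deriv f x - deriv f y| ≤ H * |x - y|) :
    ∀ x : ℝ, |deriv f x| ≤ 2 * Real.sqrt H * Real.sqrt (f x) := by
  intro x
  have hquad : ∀ t, 0 ≤ f x + deriv f x * t + H * t ^ 2 := fun t => by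
    have h := norm_sub_sub_smul_deriv_le hdiff hsmooth x (x + t)
    simp only [Real.norm_eq_abs, add_sub_cancel_left, smul_eq_mul, sq_abs] at h
    linarith [le_of_abs_le h, hnonneg (x + t)]
  calc |deriv f x| = Real.sqrt (deriv f x ^ 2) := (Real.sqrt_sq_eq_abs _).symm
    _ ≤ Real.sqrt (4 * H * f x) :=
      Real.sqrt_le_sqrt (sq_le_four_mul_mul_of_forall_quadratic_nonneg hquad)
    _ = 2 * Real.sqrt H * Real.sqrt (f x) := by
      rw [Real.sqrt_mul' _ (hnonneg x), Real.sqrt_mul zero_le_four,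
        show (4 : ℝ) = 2 ^ 2 by norm_num, Real.sqrt_sq zero_le_two]
end

section
/- If f and g are nonnegative differentiable functions on ℝ that are both L-sqrt-Lipschitz, then for any α ∈ [0,1], the function (1-α)f + αg is also L-sqrt-Lipschitz. -/
/-!
The derivative of `(1 - α) f + α g` is the same convex combination of `f'` and `g'`, so it is
bounded by `2L ((1 - α) √f + α √g)`, and concavity of `√` bounds this by `2L √((1 - α) f + α g)`.
When `L < 0` the hypotheses force `f = g = 0` at the point in question.
-/

open Real

def SqrtLipschitzWith (L : ℝ) (f : ℝ → ℝ) : Prop :=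
  ∀ x, |deriv f x| ≤ 2 * L * √(f x)

lemma sqrt_convex_combination_le {a b α : ℝ} (ha : 0 ≤ a) (hb : 0 ≤ b)
    (hα : α ∈ Set.Icc (0 : ℝ) 1) :
    (1 - α) * √a + α * √b ≤ √((1 - α) * a + α * b) :=
  strictConcaveOn_sqrt.concaveOn.2 ha hb (by linarith [hα.2]) hα.1 (by ring)

lemma abs_convex_combination_le {u v α : ℝ} (hα : α ∈ Set.Icc (0 : ℝ) 1) :
    |(1 - α) * u + α * v| ≤ (1 - α) * |u| + α * |v| := by
  have h1α : 0 ≤ 1 - α := by linarith [hα.2]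
  calc |(1 - α) * u + α * v| ≤ |(1 - α) * u| + |α * v| := abs_add_le _ _
    _ = (1 - α) * |u| + α * |v| := by rw [abs_mul, abs_mul, abs_of_nonneg h1α, abs_of_nonneg hα.1]

lemma abs_convex_combination_le_mul_sqrt {u v a b L α : ℝ} (ha : 0 ≤ a) (hb : 0 ≤ b)
    (hu : |u| ≤ 2 * L * √a) (hv : |v| ≤ 2 * L * √b) (hα : α ∈ Set.Icc (0 : ℝ) 1) :
    |(1 - α) * u + α * v| ≤ 2 * L * √((1 - α) * a + α * b) := by
  rcases le_or_gt 0 L with hL | hL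
  · have hα0 : 0 ≤ α := hα.1
    have h1α : 0 ≤ 1 - α := by linarith [hα.2]
    calc |(1 - α) * u + α * v| ≤ (1 - α) * |u| + α * |v| := abs_convex_combination_le hα
      _ ≤ (1 - α) * (2 * L * √a) + α * (2 * L * √b) := by gcongr
      _ = 2 * L * ((1 - α) * √a + α * √b) := by ring
      _ ≤ 2 * L * √((1 - α) * a + α * b) := by gcongr; exact sqrt_convex_combination_le ha hb hα
  · have ha0 : a = 0 := le_antisymm
      (sqrt_eq_zero'.1 (by nlinarith [abs_nonneg u, sqrt_nonneg a])) ha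
    have hb0 : b = 0 := le_antisymm
      (sqrt_eq_zero'.1 (by nlinarith [abs_nonneg v, sqrt_nonneg b])) hb
    subst ha0 hb0
    have hu0 : u = 0 := abs_nonpos_iff.1 (by simpa using hu)
    have hv0 : v = 0 := abs_nonpos_iff.1 (by simpa using hv)
    simp [hu0, hv0]

lemma SqrtLipschitzWith.convex_combination {f g : ℝ → ℝ} {L α : ℝ}
    (hf0 : ∀ x, 0 ≤ f x) (hg0 : ∀ x, 0 ≤ g x)
    (hfd : Differentiable ℝ f) (hgd : Differentiable ℝ g)
    (hf : SqrtLipschitzWith L f) (hg : SqrtLipschitzWith L g) (hα : α ∈ Set.Icc (0 : ℝ) 1) :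
    SqrtLipschitzWith L (fun t => (1 - α) * f t + α * g t) := by
  intro x
  rw [deriv_fun_add ((hfd x).const_mul _) ((hgd x).const_mul _),
    deriv_const_mul _ (hfd x), deriv_const_mul _ (hgd x)]
  exact abs_convex_combination_le_mul_sqrt (hf0 x) (hg0 x) (hf x) (hg x) hα

/-- If `f` and `g` are nonnegative differentiable `L`-sqrt-Lipschitz functions on `ℝ`,
then for any `α ∈ [0,1]` the function `(1-α)f + αg` is also `L`-sqrt-Lipschitz. -/
theorem sqrt_lipschitz_convex_combination (f g : ℝ → ℝ) (L : ℝ)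
    (hf0 : ∀ x, 0 ≤ f x) (hg0 : ∀ x, 0 ≤ g x)
    (hfd : Differentiable ℝ f) (hgd : Differentiable ℝ g)
    (hf : ∀ x, |deriv f x| ≤ 2 * L * Real.sqrt (f x))
    (hg : ∀ x, |deriv g x| ≤ 2 * L * Real.sqrt (g x))
    (α : ℝ) (hα : α ∈ Set.Icc (0 : ℝ) 1) :
    ∀ x, |deriv (fun t => (1 - α) * f t + α * g t) x| ≤
      2 * L * Real.sqrt ((1 - α) * f x + α * g x) :=
  SqrtLipschitzWith.convex_combination hf0 hg0 hfd hgd hf hg hα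
end

section
/- Let f: ℝ → ℝ be convex, differentiable, nonnegative, and L-sqrt-Lipschitz. Then for any ε > 0 and any x, h ∈ ℝ: f(x + h) ≥ (1 - ε)·f(x) - L²h²/ε. -/
/-- If `f : ℝ → ℝ` is convex, differentiable, nonnegative and `L`-sqrt-Lipschitz,
then for any `ε > 0` and any `x, h`: `f(x + h) ≥ (1 - ε)f(x) - L²h²/ε`. -/
theorem sqrt_lipschitz_convex_lower_bound (f : ℝ → ℝ) (L : ℝ)
    (hconv : ConvexOn ℝ Set.univ f) (hdiff : Differentiable ℝ f)
    (hnonneg : ∀ x, 0 ≤ f x)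
    (hsl : ∀ x, |deriv f x| ≤ 2 * L * Real.sqrt (f x)) :
    ∀ ε : ℝ, 0 < ε → ∀ x h : ℝ,
      f (x + h) ≥ (1 - ε) * f x - L ^ 2 * h ^ 2 / ε := by
  intro ε hε x h
  -- tangent line inequality
  have htan : f (x + h) ≥ f x + deriv f x * h := by
    rcases lt_trichotomy h 0 with hh | hh | hh
    · have hxy : x + h < x := by linarith
      have := hconv.slope_le_deriv (Set.mem_univ (x + h)) (Set.mem_univ x) hxy
        (hdiff x)
      rw [slope_def_field] at this
      have hne : x - (x + h) > 0 := by linarith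
      rw [div_le_iff₀ (by linarith : (0:ℝ) < x - (x+h))] at this
      nlinarith
    · simp [hh]
    · have hxy : x < x + h := by linarith
      have := hconv.deriv_le_slope (Set.mem_univ x) (Set.mem_univ (x + h)) hxy
        (hdiff x)
      rw [slope_def_field] at this
      rw [le_div_iff₀ (by linarith : (0:ℝ) < x + h - x)] at this
      nlinarith
  have hs := hsl x
  have hfx := hnonneg x
  have hsq : Real.sqrt (f x) ^ 2 = f x := Real.sq_sqrt hfx
  have hsnn : 0 ≤ Real.sqrt (f x) := Real.sqrt_nonneg _
  have habs : deriv f x * h ≥ -(2 * L * Real.sqrt (f x)) * |h| := by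
    have h1 : -(2 * L * Real.sqrt (f x)) ≤ deriv f x := (abs_le.mp hs).1
    have h2 : |deriv f x * h| ≤ 2 * L * Real.sqrt (f x) * |h| := by
      rw [abs_mul]; exact mul_le_mul_of_nonneg_right hs (abs_nonneg h)
    nlinarith [neg_abs_le (deriv f x * h)]
  have hamgm : 2 * L * Real.sqrt (f x) * |h| ≤ ε * f x + L ^ 2 * h ^ 2 / ε := by
    have heq : ε * f x + L ^ 2 * h ^ 2 / ε = (ε ^ 2 * f x + L ^ 2 * h ^ 2) / ε := by
      field_simp
    rw [heq, le_div_iff₀ hε]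
    nlinarith [sq_nonneg (ε * Real.sqrt (f x) - L * |h|), hsq, sq_abs h]
  linarith
end

section
/- Let x₁,...,xₙ ∈ ℝ^d, y₁,...,yₙ ∈ ℝ, and let f(ŷ, y) be nonnegative, convex, and L-sqrt-Lipschitz in ŷ. For any ε ∈ (0,1), any w, w₀ ∈ ℝ^d and b, b₀ ∈ ℝ: (1-ε)·(1/n)Σᵢ f(⟨w, xᵢ⟩ + b, yᵢ) ≤ (1/n)Σᵢ f(⟨w₀, xᵢ⟩ + b₀, yᵢ) + (2L²/(εn))Σᵢ ⟨w - w₀, xᵢ⟩² + 2L²(b - b₀)²/ε. -/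
open Matrix

/-- Tangent line inequality for a differentiable convex function on ℝ. -/
lemma tangent_le_convex (g : ℝ → ℝ) (hconv : ConvexOn ℝ Set.univ g)
    (hdiff : Differentiable ℝ g) (u v : ℝ) :
    g u + deriv g u * (v - u) ≤ g v := by
  rcases lt_trichotomy u v with h | h | h
  · have := hconv.deriv_le_slope (Set.mem_univ u) (Set.mem_univ v) h (hdiff u)
    rw [slope_def_field] at this
    have hvu : 0 < v - u := by linarith
    rw [le_div_iff₀ hvu] at this
    nlinarith
  · simp [h]
  · have := hconv.slope_le_deriv (Set.mem_univ v) (Set.mem_univ u) h (hdiff u)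
    rw [slope_def_field] at this
    have hvu : 0 < u - v := by linarith
    rw [div_le_iff₀ hvu] at this
    nlinarith

/-- Pointwise key inequality. -/
lemma pointwise_key (g : ℝ → ℝ) (L : ℝ) (hconv : ConvexOn ℝ Set.univ g)
    (hdiff : Differentiable ℝ g) (hnn : ∀ u, 0 ≤ g u)
    (hsl : ∀ u, |deriv g u| ≤ 2 * L * Real.sqrt (g u))
    (ε : ℝ) (hε : 0 < ε) (u v : ℝ) :
    (1 - ε) * g u ≤ g v + L ^ 2 * (u - v) ^ 2 / ε := by
  have htan := tangent_le_convex g hconv hdiff u v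
  set s := Real.sqrt (g u) with hs
  have hs2 : s ^ 2 = g u := Real.sq_sqrt (hnn u)
  have hsnn : 0 ≤ s := Real.sqrt_nonneg _
  have h1 : g u ≤ g v + |deriv g u| * |u - v| := by
    have : deriv g u * (u - v) ≤ |deriv g u| * |u - v| := by
      calc deriv g u * (u - v) ≤ |deriv g u * (u - v)| := le_abs_self _
        _ = |deriv g u| * |u - v| := abs_mul _ _
    nlinarith [htan]
  have h2 : g u ≤ g v + 2 * L * s * |u - v| := by
    have := hsl u
    have habs : 0 ≤ |u - v| := abs_nonneg _
    nlinarith [mul_le_mul_of_nonneg_right this habs]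
  have hL : 2 * L * s * |u - v| ≤ 2 * |L| * s * |u - v| := by
    have : L ≤ |L| := le_abs_self L
    have h0 : 0 ≤ s * |u - v| := mul_nonneg hsnn (abs_nonneg _)
    nlinarith
  -- AM-GM: 2|L| s |u-v| ≤ ε s² + L² (u-v)² / ε
  have hamgm : 2 * |L| * s * |u - v| ≤ ε * s ^ 2 + L ^ 2 * (u - v) ^ 2 / ε := by
    apply le_of_mul_le_mul_right _ hε
    have hdv : L ^ 2 * (u - v) ^ 2 / ε * ε = L ^ 2 * (u - v) ^ 2 :=
      div_mul_cancel₀ _ (ne_of_gt hε)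
    nlinarith [sq_nonneg (ε * s - |L| * |u - v|), sq_abs (u - v), sq_abs L]
  nlinarith [h2, hL, hamgm, hs2]

/-- Local Lipschitz property of the empirical loss for a loss that is nonnegative,
convex and `L`-sqrt-Lipschitz in its first argument: for any `ε ∈ (0,1)`,
`(1-ε)·L̂(w,b) ≤ L̂(w₀,b₀) + (2L²/(εn))·Σᵢ⟨w-w₀,xᵢ⟩² + 2L²(b-b₀)²/ε`. -/
theorem empirical_loss_local_lipschitz (n d : ℕ) (hn : 0 < n)
    (x : Fin n → (Fin d → ℝ)) (yv : Fin n → ℝ) (f : ℝ → ℝ → ℝ) (L : ℝ)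
    (hconv : ∀ y : ℝ, ConvexOn ℝ Set.univ (fun u => f u y))
    (hdiff : ∀ y : ℝ, Differentiable ℝ (fun u => f u y))
    (hnonneg : ∀ u y : ℝ, 0 ≤ f u y)
    (hsl : ∀ u y : ℝ, |deriv (fun t => f t y) u| ≤ 2 * L * Real.sqrt (f u y))
    (ε : ℝ) (hε : ε ∈ Set.Ioo (0 : ℝ) 1)
    (w w₀ : Fin d → ℝ) (b b₀ : ℝ) :
    (1 - ε) * ((1 / (n : ℝ)) * ∑ i, f (w ⬝ᵥ x i + b) (yv i)) ≤
      (1 / (n : ℝ)) * ∑ i, f (w₀ ⬝ᵥ x i + b₀) (yv i) +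
        (2 * L ^ 2 / (ε * (n : ℝ))) * ∑ i, ((w - w₀) ⬝ᵥ x i) ^ 2 +
        2 * L ^ 2 * (b - b₀) ^ 2 / ε := by
  obtain ⟨hε0, hε1⟩ := hε
  have hnpos : (0 : ℝ) < n := Nat.cast_pos.mpr hn
  -- pointwise bound for each i
  have key : ∀ i : Fin n,
      (1 - ε) * f (w ⬝ᵥ x i + b) (yv i) ≤
        f (w₀ ⬝ᵥ x i + b₀) (yv i) + 2 * L ^ 2 * ((w - w₀) ⬝ᵥ x i) ^ 2 / ε +
          2 * L ^ 2 * (b - b₀) ^ 2 / ε := by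
    intro i
    have hp := pointwise_key (fun u => f u (yv i)) L (hconv (yv i)) (hdiff (yv i))
      (fun u => hnonneg u (yv i)) (fun u => hsl u (yv i)) ε hε0
      (w ⬝ᵥ x i + b) (w₀ ⬝ᵥ x i + b₀)
    have hdot : (w - w₀) ⬝ᵥ x i = w ⬝ᵥ x i - w₀ ⬝ᵥ x i := by
      simp [sub_dotProduct]
    have hΔ : (w ⬝ᵥ x i + b - (w₀ ⬝ᵥ x i + b₀)) ^ 2 ≤
        2 * ((w - w₀) ⬝ᵥ x i) ^ 2 + 2 * (b - b₀) ^ 2 := by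
      rw [hdot]; nlinarith [sq_nonneg (w ⬝ᵥ x i - w₀ ⬝ᵥ x i - (b - b₀))]
    calc (1 - ε) * f (w ⬝ᵥ x i + b) (yv i)
        ≤ f (w₀ ⬝ᵥ x i + b₀) (yv i) +
          L ^ 2 * (w ⬝ᵥ x i + b - (w₀ ⬝ᵥ x i + b₀)) ^ 2 / ε := hp
      _ ≤ f (w₀ ⬝ᵥ x i + b₀) (yv i) +
          L ^ 2 * (2 * ((w - w₀) ⬝ᵥ x i) ^ 2 + 2 * (b - b₀) ^ 2) / ε := by
            gcongr
      _ = f (w₀ ⬝ᵥ x i + b₀) (yv i) + 2 * L ^ 2 * ((w - w₀) ⬝ᵥ x i) ^ 2 / ε +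
          2 * L ^ 2 * (b - b₀) ^ 2 / ε := by ring
  -- sum up
  have hsum' : (1 - ε) * ∑ i, f (w ⬝ᵥ x i + b) (yv i) ≤
      (∑ i, f (w₀ ⬝ᵥ x i + b₀) (yv i)) +
        (2 * L ^ 2 / ε) * ∑ i, ((w - w₀) ⬝ᵥ x i) ^ 2 +
        n * (2 * L ^ 2 * (b - b₀) ^ 2 / ε) := by
    have h := Finset.sum_le_sum (fun i (_ : i ∈ (Finset.univ : Finset (Fin n))) => key i)
    rw [Finset.sum_add_distrib, Finset.sum_add_distrib, Finset.sum_const,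
      Finset.card_univ, Fintype.card_fin, nsmul_eq_mul] at h
    rw [Finset.mul_sum]
    calc (∑ i, (1 - ε) * f (w ⬝ᵥ x i + b) (yv i)) ≤ _ := h
      _ = _ := by
          congr 1
          congr 1
          rw [Finset.mul_sum]
          exact Finset.sum_congr rfl fun i _ => by ring
  have hmul := mul_le_mul_of_nonneg_left hsum' (by positivity : (0:ℝ) ≤ 1 / n)
  calc (1 - ε) * ((1 / (n : ℝ)) * ∑ i, f (w ⬝ᵥ x i + b) (yv i))
      = (1 / (n : ℝ)) * ((1 - ε) * ∑ i, f (w ⬝ᵥ x i + b) (yv i)) := by ring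
    _ ≤ _ := hmul
    _ = (1 / (n : ℝ)) * ∑ i, f (w₀ ⬝ᵥ x i + b₀) (yv i) +
        (2 * L ^ 2 / (ε * (n : ℝ))) * ∑ i, ((w - w₀) ⬝ᵥ x i) ^ 2 +
        2 * L ^ 2 * (b - b₀) ^ 2 / ε := by
        field_simp
end

section
/- Let K ⊆ ℝ^d be a compact set and f, g: ℝ^d → ℝ continuous functions. Then lim_{r → ∞} sup_{w ∈ K} inf_{0 ≤ λ ≤ r} [λ·f(w) + g(w)] = sup { g(w) : w ∈ K, f(w) ≥ 0 }, where the right-hand side is -∞ if the constraint set is empty. -/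
open Filter

/-- For a compact `K ⊆ ℝ^d` and continuous `f, g`, we have
`lim_{r→∞} sup_{w ∈ K} inf_{0 ≤ λ ≤ r} [λ f(w) + g(w)] = sup {g(w) : w ∈ K, f(w) ≥ 0}`,
in the extended reals (`sup ∅ = -∞`). -/
theorem sup_inf_truncation_limit (d : ℕ) (K : Set (EuclideanSpace ℝ (Fin d)))
    (hK : IsCompact K) (f g : EuclideanSpace ℝ (Fin d) → ℝ)
    (hf : Continuous f) (hg : Continuous g) :
    Tendsto
      (fun r : ℝ => ⨆ w ∈ K,
        ((sInf {v : ℝ | ∃ lam ∈ Set.Icc (0 : ℝ) r, v = lam * f w + g w} : ℝ) : EReal))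
      atTop
      (nhds (⨆ w ∈ {w ∈ K | 0 ≤ f w}, ((g w : EReal)))) := by
  set m : EuclideanSpace ℝ (Fin d) → ℝ := fun w => min (f w) 0 with hm
  have hmc : Continuous m := hf.min continuous_const
  have hmle : ∀ w, m w ≤ 0 := fun w => min_le_right _ _
  set φ : ℝ → EReal := fun r => ⨆ w ∈ K, ((g w + max r 0 * m w : ℝ) : EReal) with hφ
  set L : EReal := ⨆ w ∈ {w ∈ K | 0 ≤ f w}, (g w : EReal) with hL
  have hsinf : ∀ (r : ℝ), 0 ≤ r → ∀ w,
      sInf {v : ℝ | ∃ lam ∈ Set.Icc (0 : ℝ) r, v = lam * f w + g w}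
        = g w + r * m w := by
    intro r hr w
    apply IsLeast.csInf_eq
    constructor
    · rcases le_or_gt 0 (f w) with h | h
      · exact ⟨0, ⟨le_refl 0, hr⟩, by simp [hm, min_eq_right h]⟩
      · refine ⟨r, ⟨hr, le_refl r⟩, ?_⟩
        rw [hm]; simp only [min_eq_left h.le]; ring
    · rintro v ⟨lam, ⟨h0, hrl⟩, rfl⟩
      have : r * m w ≤ lam * f w := by
        rcases le_or_gt 0 (f w) with h | h
        · rw [hm]; simp only [min_eq_right h]; nlinarith
        · rw [hm]; simp only [min_eq_left h.le]; nlinarith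
      linarith
  have hanti : Antitone φ := by
    intro r s hrs
    apply iSup₂_mono
    intro w hw
    apply EReal.coe_le_coe_iff.2
    have := mul_le_mul_of_nonpos_right (max_le_max hrs (le_refl (0:ℝ))) (hmle w)
    linarith
  have hconv : Tendsto φ atTop (nhds (⨅ r, φ r)) := tendsto_atTop_iInf hanti
  have hle : L ≤ ⨅ r, φ r := by
    apply le_iInf; intro r
    apply iSup₂_le; rintro w ⟨hwK, hfw⟩
    have hmw : m w = 0 := min_eq_right hfw
    have : (g w : EReal) = ((g w + max r 0 * m w : ℝ) : EReal) := by rw [hmw]; norm_num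
    rw [this]
    exact le_iSup₂ (f := fun w (_ : w ∈ K) => ((g w + max r 0 * m w : ℝ) : EReal)) w hwK
  have hge : ⨅ r, φ r ≤ L := by
    by_contra hcon
    push_neg at hcon
    obtain ⟨c, hc1, hc2⟩ := EReal.lt_iff_exists_real_btwn.1 hcon
    set A : ℕ → Set (EuclideanSpace ℝ (Fin d)) :=
      fun n => K ∩ {w | c ≤ g w + n * m w} with hA
    have hAclosed : ∀ n, IsClosed (A n) := fun n =>
      hK.isClosed.inter (isClosed_le continuous_const (hg.add (continuous_const.mul hmc)))
    have hAcompact : ∀ n, IsCompact (A n) := fun n =>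
      hK.inter_right (isClosed_le continuous_const (hg.add (continuous_const.mul hmc)))
    have hAanti : Antitone A := by
      intro i j hij w hw
      refine ⟨hw.1, ?_⟩
      have h2 := hw.2
      have : (j : ℝ) * m w ≤ (i : ℝ) * m w :=
        mul_le_mul_of_nonpos_right (by exact_mod_cast hij) (hmle w)
      simp only [Set.mem_setOf_eq] at h2 ⊢
      linarith
    have hAne : ∀ n, (A n).Nonempty := by
      intro n
      have h1 : (c : EReal) < φ n := lt_of_lt_of_le hc2 (iInf_le _ _)
      rw [hφ] at h1
      simp only [lt_iSup_iff] at h1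
      obtain ⟨w, hwK, hlt⟩ := h1
      refine ⟨w, hwK, ?_⟩
      have : c < g w + max (n:ℝ) 0 * m w := EReal.coe_lt_coe_iff.1 hlt
      rw [max_eq_left (by positivity)] at this
      exact this.le
    obtain ⟨w, hw⟩ := IsCompact.nonempty_iInter_of_directed_nonempty_isCompact_isClosed
      A hAanti.directed_ge hAne hAcompact hAclosed
    simp only [Set.mem_iInter] at hw
    have hwK : w ∈ K := (hw 0).1
    have hwc : ∀ n : ℕ, c ≤ g w + n * m w := fun n => (hw n).2
    have hmw : m w = 0 := by
      by_contra hne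
      have hneg : m w < 0 := lt_of_le_of_ne (hmle w) hne
      obtain ⟨n, hn⟩ := exists_nat_gt ((g w - c) / (-m w))
      have := hwc n
      rw [div_lt_iff₀ (by linarith)] at hn
      nlinarith
    have hfw : 0 ≤ f w := min_eq_right_iff.1 hmw
    have hgL : (g w : EReal) ≤ L :=
      le_iSup₂ (f := fun w (_ : w ∈ {w ∈ K | 0 ≤ f w}) => (g w : EReal)) w ⟨hwK, hfw⟩
    have : (c : EReal) ≤ L := le_trans (by exact_mod_cast hwc 0 |>.trans (by simp)) hgL
    exact absurd (lt_of_le_of_lt this hc1) (lt_irrefl _)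
  have hiL : (⨅ r, φ r) = L := le_antisymm hge hle
  rw [← hiL]
  apply hconv.congr'
  filter_upwards [eventually_ge_atTop (0:ℝ)] with r hr
  rw [hφ]
  simp only [hsinf r hr, max_eq_left hr]
end
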